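/- Let n = n_1 + n_2 + … + n_t + s with n_1 ≥ n_2 ≥ … ≥ n_t ≥ p and n_1 < n - s - p(t-1). Then ρ(K_s ∨ (K_{n_1} ∪ K_{n_2} ∪ … ∪ K_{n_t})) < ρ(K_s ∨ (K_{n-s-p(t-1)} ∪ (t-1)K_p)). -/

import Mathlib

/-!
Label the vertices of `K_s ∨ (K_{n₁} ∪ ⋯ ∪ K_{n_t})` by `0` on `K_s` and by `i` on `K_{nᵢ}`.
For `s ≥ 1` take a nonnegative Perron vector `x` with eigenvalue `ρ`. On each `K_{nᵢ}` the
eigen-equation reads `(ρ + 1) x_v = σ₀ + σᵢ`, where `σᵢ` is the weight of `x` on `K_{nᵢ}`; hence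
`σᵢ (ρ + 1 - nᵢ) = nᵢ σ₀`, and `σᵢ` increases with `nᵢ`. Moving one vertex `u` from `K_{n_j}` into a
clique `K_{nᵢ}` with `nᵢ ≥ n_j` changes `xᵀAx` by `2 x_u (σᵢ - σ_j + x_u) > 0`, so `ρ` strictly
increases. Moving vertices into `K_{n₁}` from the other cliques until these have size `p` reaches
`K_s ∨ (K_{n-s-p(t-1)} ∪ (t-1)K_p)`. For `s = 0` both graphs are disjoint unions of cliques, and
`ρ = n₁ - 1 < n - p(t-1) - 1` follows from the row-sum bound and the clique bound.
-/

open Matrix BigOperators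

open scoped Classical in
noncomputable def adjMat {V : Type*} [Fintype V] (G : SimpleGraph V) : Matrix V V ℝ :=
  Matrix.of fun a b => if G.Adj a b then (1 : ℝ) else 0

/-- The spectral radius of a real symmetric matrix: the largest (real) eigenvalue. -/
noncomputable def specRad {V : Type*} [Fintype V] [DecidableEq V] (M : Matrix V V ℝ) : ℝ :=
  sSup {t : ℝ | Module.End.HasEigenvalue (Matrix.toLin' M) t}

def jcAux {s t : ℕ} {nn : Fin t → ℕ} :
    (Fin s ⊕ (Σ i : Fin t, Fin (nn i))) → (Fin s ⊕ (Σ i : Fin t, Fin (nn i))) → Prop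
  | Sum.inl _, _ => True
  | Sum.inr ⟨i, _⟩, Sum.inr ⟨j, _⟩ => i = j
  | _, _ => False

/-- The join `K_s ∨ (K_{n 0} ∪ K_{n 1} ∪ ⋯ ∪ K_{n (t-1)})` of a clique of size `s`
with the disjoint union of cliques of sizes `nn 0, …, nn (t-1)`. -/
def joinCliques (s : ℕ) {t : ℕ} (nn : Fin t → ℕ) :
    SimpleGraph (Fin s ⊕ (Σ i : Fin t, Fin (nn i))) where
  Adj a b := a ≠ b ∧ (jcAux a b ∨ jcAux b a)
  symm := ⟨fun a b h => ⟨h.1.symm, h.2.symm⟩⟩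
  loopless := ⟨fun a h => h.1 rfl⟩

open Finset

section QuadraticForm

variable {V : Type*} [Fintype V]

lemma Matrix.IsHermitian.dotProduct_mulVec_of_eq_zero_off {D : Matrix V V ℝ}
    (hD : D.IsHermitian) {u : V} (hoff : ∀ i j, i ≠ u → j ≠ u → D i j = 0) (huu : D u u = 0)
    (x : V → ℝ) :
    x ⬝ᵥ D *ᵥ x = 2 * x u * (D *ᵥ x) u := by
  have hcol : ∀ i, i ≠ u → (D *ᵥ x) i = D i u * x u := fun i hi => by
    rw [mulVec, dotProduct, sum_eq_single u (fun j _ hj => by rw [hoff i j hi hj, zero_mul])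
      (by simp)]
  have hrow : ∑ i, x i * D i u = (D *ᵥ x) u := by
    simp only [mulVec, dotProduct, ← hD.apply u, star_trivial, mul_comm]
  calc x ⬝ᵥ D *ᵥ x = ∑ i, (x i * (D *ᵥ x) i - x i * D i u * x u) + ∑ i, x i * D i u * x u := by
        rw [← sum_add_distrib]; simp [dotProduct]
    _ = x u * (D *ᵥ x) u + (∑ i, x i * D i u) * x u := by
        rw [sum_eq_single u (fun i _ hi => by rw [hcol i hi]; ring) (by simp), huu, sum_mul]
        ring
    _ = 2 * x u * (D *ᵥ x) u := by rw [hrow]; ring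

end QuadraticForm

section Spectral

variable {V : Type*} [Fintype V] [DecidableEq V] {M : Matrix V V ℝ}

lemma specRad_eq_sSup_spectrum (M : Matrix V V ℝ) : specRad M = sSup (spectrum ℝ M) := by
  simp only [specRad, Module.End.hasEigenvalue_iff_mem_spectrum, spectrum_toLin']
  rfl

lemma le_specRad {r : ℝ} (hr : r ∈ spectrum ℝ M) : r ≤ specRad M := by
  rw [specRad_eq_sSup_spectrum]
  exact le_csSup finite_real_spectrum.bddAbove hr

lemma specRad_submatrix_equiv {W : Type*} [Fintype W] [DecidableEq W] (M : Matrix V V ℝ)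
    (e : W ≃ V) : specRad (M.submatrix e e) = specRad M := by
  rw [specRad_eq_sSup_spectrum, specRad_eq_sSup_spectrum,
    ← AlgEquiv.spectrum_eq (reindexAlgEquiv ℝ ℝ e.symm) M]
  rfl

lemma star_dotProduct_algebraMap_sub_mulVec (r : ℝ) (M : Matrix V V ℝ) (x : V → ℝ) :
    star x ⬝ᵥ (algebraMap ℝ (Matrix V V ℝ) r - M) *ᵥ x = r * (x ⬝ᵥ x) - x ⬝ᵥ M *ᵥ x := by
  rw [star_trivial, Algebra.algebraMap_eq_smul_one, sub_mulVec, smul_mulVec, one_mulVec,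
    dotProduct_sub, dotProduct_smul, smul_eq_mul]

namespace Matrix.IsHermitian

lemma specRad_mem_spectrum [Nonempty V] (hM : M.IsHermitian) : specRad M ∈ spectrum ℝ M := by
  rw [specRad_eq_sSup_spectrum]
  exact (hM.spectrum_real_eq_range_eigenvalues ▸ Set.range_nonempty _).csSup_mem
    finite_real_spectrum

open scoped MatrixOrder in
lemma posSemidef_algebraMap_specRad_sub (hM : M.IsHermitian) :
    (algebraMap ℝ _ (specRad M) - M).PosSemidef :=
  (le_algebraMap_iff_spectrum_le hM).2 fun _ => le_specRad

lemma dotProduct_mulVec_le (hM : M.IsHermitian) (x : V → ℝ) :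
    x ⬝ᵥ M *ᵥ x ≤ specRad M * (x ⬝ᵥ x) := by
  have := hM.posSemidef_algebraMap_specRad_sub.dotProduct_mulVec_nonneg x
  rw [star_dotProduct_algebraMap_sub_mulVec] at this
  linarith

lemma exists_nonneg_eigenvector [Nonempty V] (hM : M.IsHermitian) (hnn : ∀ i j, 0 ≤ M i j) :
    ∃ x : V → ℝ, x ≠ 0 ∧ (∀ i, 0 ≤ x i) ∧ M *ᵥ x = specRad M • x := by
  obtain ⟨v, hv⟩ := (Module.End.hasEigenvalue_iff_mem_spectrum.2
    ((spectrum_toLin' M).symm ▸ hM.specRad_mem_spectrum)).exists_hasEigenvector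
  have hMv : M *ᵥ v = specRad M • v := by simpa using hv.apply_eq_smul
  set y : V → ℝ := fun i => |v i|
  have hyy : y ⬝ᵥ y = v ⬝ᵥ v := by simp [y, dotProduct]
  have hvy : v ⬝ᵥ M *ᵥ v ≤ y ⬝ᵥ M *ᵥ y := by
    simp only [dotProduct, mulVec, mul_sum]
    refine sum_le_sum fun i _ => sum_le_sum fun j _ => ?_
    calc v i * (M i j * v j) ≤ |v i * (M i j * v j)| := le_abs_self _
      _ = y i * (M i j * y j) := by simp [y, abs_mul, abs_of_nonneg (hnn i j)]
  -- `|v|` also maximises the Rayleigh quotient, so it lies in the kernel of `ρ - M ≥ 0`.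
  have hker : star y ⬝ᵥ (algebraMap ℝ _ (specRad M) - M) *ᵥ y = 0 := by
    refine le_antisymm ?_ (hM.posSemidef_algebraMap_specRad_sub.dotProduct_mulVec_nonneg y)
    rw [star_dotProduct_algebraMap_sub_mulVec, hyy]
    rw [hMv, dotProduct_smul, smul_eq_mul] at hvy
    linarith
  rw [hM.posSemidef_algebraMap_specRad_sub.dotProduct_mulVec_zero_iff, sub_mulVec,
    Algebra.algebraMap_eq_smul_one, smul_mulVec, one_mulVec, sub_eq_zero] at hker
  refine ⟨y, fun hy => hv.2 ?_, fun i => abs_nonneg _, hker.symm⟩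
  ext i
  simpa [y] using congrFun hy i

lemma specRad_le_of_sum_row_le [Nonempty V] (hM : M.IsHermitian) (hnn : ∀ i j, 0 ≤ M i j)
    {d : ℝ} (hd : ∀ i, ∑ j, M i j ≤ d) : specRad M ≤ d := by
  obtain ⟨x, hx0, hxnn, hx⟩ := hM.exists_nonneg_eigenvector hnn
  obtain ⟨i, -, hi⟩ := exists_max_image univ x univ_nonempty
  have hxi : 0 < x i := by
    by_contra! h
    exact hx0 (funext fun j => le_antisymm ((hi j (mem_univ j)).trans h) (hxnn j))
  refine le_of_mul_le_mul_right ?_ hxi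
  calc specRad M * x i = ∑ j, M i j * x j := by rw [← smul_eq_mul, ← Pi.smul_apply, ← hx]; rfl
    _ ≤ ∑ j, M i j * x i := by gcongr with j; exacts [hnn i j, hi j (mem_univ j)]
    _ = (∑ j, M i j) * x i := by rw [sum_mul]
    _ ≤ d * x i := by gcongr; exact hd i

end Matrix.IsHermitian

end Spectral

section Graph

variable {V W : Type*} [Fintype V] [Fintype W] (G : SimpleGraph V)

open scoped Classical in
lemma adjMat_apply (a b : V) : adjMat G a b = if G.Adj a b then 1 else 0 := rfl

lemma isHermitian_adjMat : (adjMat G).IsHermitian := by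
  ext a b
  simp only [conjTranspose_apply, star_trivial, adjMat_apply]
  rw [G.adj_comm]

lemma adjMat_nonneg (a b : V) : 0 ≤ adjMat G a b := by
  rw [adjMat_apply]
  split_ifs <;> norm_num

variable [DecidableEq V] [DecidableEq W]

lemma adjMat_mulVec_apply (x : V → ℝ) {v : V} {T : Finset V} (hT : ∀ w, w ∈ T ↔ G.Adj v w) :
    (adjMat G *ᵥ x) v = ∑ w ∈ T, x w := by
  simp only [mulVec, dotProduct, adjMat_apply, ite_mul, one_mul, zero_mul, ← hT]
  rw [sum_ite_mem, univ_inter]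

lemma specRad_adjMat_congr {H : SimpleGraph W} (e : G ≃g H) :
    specRad (adjMat G) = specRad (adjMat H) := by
  rw [← specRad_submatrix_equiv (adjMat H) e.toEquiv]
  congr 1
  ext a b
  simp only [submatrix_apply, adjMat_apply]
  rw [show H.Adj (e.toEquiv a) (e.toEquiv b) ↔ G.Adj a b from e.map_adj_iff]

lemma le_specRad_adjMat_of_isClique {C : Finset V} (hC : G.IsClique (C : Set V))
    (hne : C.Nonempty) : (#C : ℝ) - 1 ≤ specRad (adjMat G) := by
  set x : V → ℝ := fun v => if v ∈ C then 1 else 0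
  have hrow : ∀ v ∈ C, (adjMat G *ᵥ x) v = #C - 1 := by
    intro v hv
    simp only [mulVec, dotProduct, x, mul_ite, mul_one, mul_zero]
    rw [sum_ite_mem, univ_inter, ← sum_erase_add C _ hv, adjMat_apply, if_neg (G.loopless.irrefl v),
      add_zero, sum_congr rfl fun w hw => ?_, sum_const, card_erase_of_mem hv, nsmul_one,
      Nat.cast_sub (card_pos.2 ⟨v, hv⟩), Nat.cast_one]
    rw [adjMat_apply, if_pos (hC hv (mem_of_mem_erase hw) (ne_of_mem_erase hw).symm)]
  have hquad : x ⬝ᵥ adjMat G *ᵥ x = #C * (#C - 1) := by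
    simp only [dotProduct, x, ite_mul, one_mul, zero_mul]
    rw [sum_ite_mem, univ_inter, sum_congr rfl hrow, sum_const, nsmul_eq_mul]
  have hnorm : x ⬝ᵥ x = #C := by
    simp [dotProduct, x]
  have := (isHermitian_adjMat G).dotProduct_mulVec_le x
  rw [hquad, hnorm] at this
  have hC : (0 : ℝ) < #C := by exact_mod_cast hne.card_pos
  nlinarith

end Graph

section Fibers

variable {V : Type*} [Fintype V] [DecidableEq V]

lemma sum_fiber_update_add {M : Type*} [AddCommMonoid M] (f : V → M) (c : V → ℕ) (u : V)
    (l k : ℕ) :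
    ∑ v with Function.update c u l v = k, f v + (if c u = k then f u else 0) =
      ∑ v with c v = k, f v + (if l = k then f u else 0) := by
  rw [sum_filter, sum_filter, ← add_sum_erase _ _ (mem_univ u), ← add_sum_erase _ _ (mem_univ u),
    Function.update_self,
    sum_congr rfl fun v hv => by rw [Function.update_of_ne (ne_of_mem_erase hv)]]
  abel

lemma card_fiber_update_add (c : V → ℕ) (u : V) (l k : ℕ) :
    #{v | Function.update c u l v = k} + (if c u = k then 1 else 0) =
      #{v | c v = k} + (if l = k then 1 else 0) := by
  simpa only [card_eq_sum_ones] using sum_fiber_update_add (fun _ => 1) c u l k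

end Fibers

section LabelGraph

variable {V W : Type*}

-- `labelGraph c` is `K_{n₀} ∨ (K_{n₁} ∪ K_{n₂} ∪ ⋯)` with `nₖ = #c⁻¹(k)`: label `0` marks the
-- dominating clique.
def labelGraph (c : V → ℕ) : SimpleGraph V :=
  SimpleGraph.fromRel fun a b => c a = 0 ∨ c a = c b

variable {c : V → ℕ}

lemma labelGraph_adj_of_ne_zero {v : V} (hv : c v ≠ 0) (w : V) :
    (labelGraph c).Adj v w ↔ w ≠ v ∧ (c w = 0 ∨ c w = c v) := by
  simp only [labelGraph, SimpleGraph.fromRel_adj, ne_comm (a := w)]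
  grind

lemma labelGraph_adj_of_eq_zero {v : V} (hv : c v = 0) (w : V) :
    (labelGraph c).Adj v w ↔ w ≠ v := by
  simp [labelGraph, SimpleGraph.fromRel_adj, hv, ne_comm]

variable [Fintype V] [DecidableEq V] [Fintype W] [DecidableEq W]

lemma mulVec_labelGraph_of_ne_zero (x : V → ℝ) {v : V} (hv : c v ≠ 0) :
    (adjMat (labelGraph c) *ᵥ x) v = ∑ w with c w = 0, x w + ∑ w with c w = c v, x w - x v := by
  rw [adjMat_mulVec_apply _ x
      (T := (({w | c w = 0} : Finset V) ∪ ({w | c w = c v} : Finset V)).erase v) fun w => ?_,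
    sum_erase_eq_sub (by simp),
    sum_union (disjoint_filter.2 fun w _ (h0 : c w = 0) (h : c w = c v) => hv (h ▸ h0))]
  simp [labelGraph_adj_of_ne_zero hv]

lemma mulVec_labelGraph_of_eq_zero (x : V → ℝ) {v : V} (hv : c v = 0) :
    (adjMat (labelGraph c) *ᵥ x) v = ∑ w, x w - x v := by
  rw [adjMat_mulVec_apply _ x (T := univ.erase v) fun w => ?_, sum_erase_eq_sub (mem_univ v)]
  simp [labelGraph_adj_of_eq_zero hv]

lemma le_specRad_labelGraph {k : ℕ} (hk : k ≠ 0) (hne : ∃ v, c v = k) :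
    (#{v | c v = 0} + #{v | c v = k} : ℝ) - 1 ≤ specRad (adjMat (labelGraph c)) := by
  have hclique : (labelGraph c).IsClique
      ((({v | c v = 0} : Finset V) ∪ ({v | c v = k} : Finset V) : Finset V) : Set V) := by
    intro a ha b hb hab
    simp only [coe_union, coe_filter, mem_univ, true_and, Set.mem_union, Set.mem_ofPred_eq] at ha hb
    simp only [labelGraph, SimpleGraph.fromRel_adj]
    grind
  obtain ⟨v, hv⟩ := hne
  have := le_specRad_adjMat_of_isClique _ hclique ⟨v, by simp [hv]⟩
  rwa [card_union_of_disjoint (disjoint_filter.2 fun w _ (h0 : c w = 0) (h : c w = k) =>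
    hk (h ▸ h0)), Nat.cast_add] at this

lemma specRad_labelGraph_congr {c' : W → ℕ} (h : ∀ k, #{v | c v = k} = #{w | c' w = k}) :
    specRad (adjMat (labelGraph c)) = specRad (adjMat (labelGraph c')) := by
  let e : V ≃ W := Equiv.ofFiberEquiv fun k => Fintype.equivOfCardEq <|
    (Fintype.card_subtype _).trans ((h k).trans (Fintype.card_subtype _).symm)
  have he : ∀ v, c' (e v) = c v := Equiv.ofFiberEquiv_map _
  refine specRad_adjMat_congr _ ⟨e, fun {a b} => ?_⟩
  simp only [labelGraph, SimpleGraph.fromRel_adj, he, e.injective.ne_iff]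

lemma specRad_labelGraph_le_of_forall_ne_zero [Nonempty V] (h0 : ∀ v, c v ≠ 0) {m : ℕ}
    (hm : ∀ v, #{w | c w = c v} ≤ m) : specRad (adjMat (labelGraph c)) ≤ m - 1 := by
  refine (isHermitian_adjMat _).specRad_le_of_sum_row_le (adjMat_nonneg _) fun v => ?_
  have hrow := mulVec_labelGraph_of_ne_zero (fun _ => (1 : ℝ)) (h0 v)
  simp only [mulVec, dotProduct, mul_one, sum_const, nsmul_one, filter_false_of_mem
    fun w _ => h0 w, card_empty, Nat.cast_zero, zero_add] at hrow
  rw [hrow]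
  have : (#{w | c w = c v} : ℝ) ≤ m := by exact_mod_cast hm v
  linarith

lemma dotProduct_mulVec_labelGraph_update (x : V → ℝ) {u : V} {l : ℕ} (hu : c u ≠ 0)
    (hl : l ≠ 0) (hul : c u ≠ l) :
    x ⬝ᵥ adjMat (labelGraph (Function.update c u l)) *ᵥ x = x ⬝ᵥ adjMat (labelGraph c) *ᵥ x +
      2 * x u * (∑ v with c v = l, x v - ∑ v with c v = c u, x v + x u) := by
  have hD := (isHermitian_adjMat (labelGraph (Function.update c u l))).sub
    (isHermitian_adjMat (labelGraph c))
  have key := hD.dotProduct_mulVec_of_eq_zero_off (u := u) (fun i j hi hj => ?_) ?_ x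
  · have h0 := sum_fiber_update_add x c u l 0
    have hl' := sum_fiber_update_add x c u l l
    rw [sub_mulVec, dotProduct_sub, Pi.sub_apply, mulVec_labelGraph_of_ne_zero x hu,
      mulVec_labelGraph_of_ne_zero x (by rwa [Function.update_self]), Function.update_self] at key
    simp only [if_neg hu, if_neg hl, if_neg hul, if_true, add_zero] at h0 hl'
    rw [h0, hl'] at key
    linear_combination key
  · simp [adjMat_apply, labelGraph, Function.update_of_ne hi, Function.update_of_ne hj]
  · simp [adjMat_apply]

end LabelGraph

section Step

variable {V : Type*} [Fintype V] [DecidableEq V] {c : V → ℕ} {x : V → ℝ} {ρ : ℝ}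

lemma mul_eq_sum_fibers_of_eigen (hx : adjMat (labelGraph c) *ᵥ x = ρ • x) {v : V}
    (hv : c v ≠ 0) : (ρ + 1) * x v = ∑ w with c w = 0, x w + ∑ w with c w = c v, x w := by
  have := congrFun hx v
  rw [mulVec_labelGraph_of_ne_zero x hv, Pi.smul_apply, smul_eq_mul] at this
  linarith

lemma sum_fiber_mul_of_eigen (hx : adjMat (labelGraph c) *ᵥ x = ρ • x) {k : ℕ} (hk : k ≠ 0) :
    (∑ v with c v = k, x v) * (ρ + 1 - #{v | c v = k}) =
      #{v | c v = k} * ∑ v with c v = 0, x v := by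
  have : ∑ v with c v = k, (ρ + 1) * x v =
      ∑ v with c v = k, (∑ w with c w = 0, x w + ∑ w with c w = k, x w) :=
    sum_congr rfl fun v hv => by
      rw [mul_eq_sum_fibers_of_eigen hx ((mem_filter.1 hv).2 ▸ hk), (mem_filter.1 hv).2]
  rw [← mul_sum, sum_const, nsmul_eq_mul] at this
  linarith

lemma sum_fiber_zero_pos_of_eigen (hx : adjMat (labelGraph c) *ᵥ x = ρ • x)
    (hxnn : ∀ v, 0 ≤ x v) (hx0 : x ≠ 0) (h0 : ∃ w, c w = 0) : 0 < ∑ v with c v = 0, x v := by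
  obtain ⟨w, hw⟩ := h0
  refine (sum_nonneg fun v _ => hxnn v).lt_of_ne fun hzero => hx0 ?_
  have hxw : x w = 0 :=
    (sum_eq_zero_iff_of_nonneg fun v _ => hxnn v).1 hzero.symm w (by simp [hw])
  have hrow := congrFun hx w
  rw [mulVec_labelGraph_of_eq_zero x hw, Pi.smul_apply, hxw, smul_zero, sub_zero] at hrow
  funext v
  exact (sum_eq_zero_iff_of_nonneg fun v _ => hxnn v).1 hrow v (mem_univ v)

theorem specRad_labelGraph_lt_update {u : V} {l : ℕ} (h0 : ∃ w, c w = 0) (hu : c u ≠ 0)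
    (hl : l ≠ 0) (hul : c u ≠ l) (hcard : #{v | c v = c u} ≤ #{v | c v = l}) :
    specRad (adjMat (labelGraph c)) < specRad (adjMat (labelGraph (Function.update c u l))) := by
  have : Nonempty V := ⟨u⟩
  obtain ⟨x, hx0, hxnn, hx⟩ :=
    (isHermitian_adjMat (labelGraph c)).exists_nonneg_eigenvector (adjMat_nonneg _)
  set ρ := specRad (adjMat (labelGraph c))
  have hS := sum_fiber_zero_pos_of_eigen hx hxnn hx0 h0
  have hgap : ∀ k, k ≠ 0 → (∃ v, c v = k) → (1 : ℝ) ≤ ρ + 1 - #{v | c v = k} := by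
    intro k hk hne
    have := le_specRad_labelGraph hk hne
    have : (1 : ℝ) ≤ #{v | c v = 0} := by
      obtain ⟨w, hw⟩ := h0
      exact_mod_cast card_pos.2 ⟨w, by simp [hw]⟩
    linarith
  have hgap_u := hgap _ hu ⟨u, rfl⟩
  have hgap_l : (1 : ℝ) ≤ ρ + 1 - #{v | c v = l} := by
    obtain ⟨v, hv⟩ := card_pos.1 ((card_pos.2 ⟨u, by simp⟩).trans_le hcard)
    exact hgap _ hl ⟨v, by simpa using hv⟩
  -- the Perron vector carries more weight on the larger clique
  have hσ : ∑ v with c v = c u, x v ≤ ∑ v with c v = l, x v := by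
    rw [eq_div_of_mul_eq (by linarith) (sum_fiber_mul_of_eigen hx hu),
      eq_div_of_mul_eq (by linarith) (sum_fiber_mul_of_eigen hx hl)]
    gcongr
  have hxu : 0 < x u := by
    have := mul_eq_sum_fibers_of_eigen hx hu
    have := sum_nonneg fun v (_ : v ∈ ({v | c v = c u} : Finset V)) => hxnn v
    nlinarith
  have hxx : 0 < x ⬝ᵥ x :=
    (sum_nonneg fun v _ => mul_self_nonneg (x v)).lt_of_ne
      (Ne.symm (mt dotProduct_self_eq_zero.1 hx0))
  have hRay := (isHermitian_adjMat (labelGraph (Function.update c u l))).dotProduct_mulVec_le x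
  rw [dotProduct_mulVec_labelGraph_update x hu hl hul, hx, dotProduct_smul, smul_eq_mul] at hRay
  nlinarith

end Step

section JoinCliques

variable {s t : ℕ}

def cliqueLabel (s : ℕ) {t : ℕ} (nn : Fin t → ℕ) : Fin s ⊕ (Σ i : Fin t, Fin (nn i)) → ℕ :=
  Sum.elim (fun _ => 0) fun b => b.1 + 1

lemma joinCliques_eq_labelGraph (s : ℕ) (nn : Fin t → ℕ) :
    joinCliques s nn = labelGraph (cliqueLabel s nn) := by
  ext a b
  rcases a with a | ⟨i, y⟩ <;> rcases b with b | ⟨j, z⟩ <;>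
    simp [joinCliques, jcAux, labelGraph, cliqueLabel, Fin.ext_iff, eq_comm]

lemma card_cliqueLabel (nn : Fin t → ℕ) (k : ℕ) :
    #{v | cliqueLabel s nn v = k} =
      (if k = 0 then s else 0) + ∑ i : Fin t with i.val + 1 = k, nn i := by
  rw [card_eq_sum_ones, sum_filter, Fintype.sum_sum_type, Fintype.sum_sigma, sum_filter]
  simp [cliqueLabel, eq_comm]

lemma card_cliqueLabel_zero (nn : Fin t → ℕ) : #{v | cliqueLabel s nn v = 0} = s := by
  simp [card_cliqueLabel]

lemma card_cliqueLabel_succ (nn : Fin t → ℕ) (i : Fin t) :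
    #{v | cliqueLabel s nn v = i + 1} = nn i := by
  rw [card_cliqueLabel, sum_filter]
  simp [Fin.val_inj]

-- `hmove` says that `nn'` arises from `nn` by moving one vertex from clique `j` to clique `i`.
theorem specRad_joinCliques_lt_of_move (hs : 0 < s) {nn nn' : Fin t → ℕ} {i j : Fin t}
    (hij : i ≠ j) (hj : 0 < nn j) (hji : nn j ≤ nn i)
    (hmove : ∀ m, nn' m + (if m = j then 1 else 0) = nn m + (if m = i then 1 else 0)) :
    specRad (adjMat (joinCliques s nn)) < specRad (adjMat (joinCliques s nn')) := by
  set u : Fin s ⊕ (Σ i : Fin t, Fin (nn i)) := Sum.inr ⟨j, ⟨0, hj⟩⟩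
  have hcu : cliqueLabel s nn u = j + 1 := rfl
  rw [joinCliques_eq_labelGraph, joinCliques_eq_labelGraph]
  refine (specRad_labelGraph_lt_update (u := u) (l := i + 1) ⟨Sum.inl ⟨0, hs⟩, rfl⟩
    (by simp [hcu]) (Nat.succ_ne_zero _) (by simpa [hcu, Fin.val_inj] using hij.symm)
    (by rwa [hcu, card_cliqueLabel_succ, card_cliqueLabel_succ])).trans_eq
    (specRad_labelGraph_congr fun k => ?_)
  have hupd := card_fiber_update_add (cliqueLabel s nn) u (i + 1) k
  have hsum := sum_congr rfl fun m (_ : m ∈ ({m | m.val + 1 = k} : Finset (Fin t))) => hmove m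
  simp only [sum_add_distrib, sum_ite_eq', mem_filter, mem_univ, true_and] at hsum
  rw [card_cliqueLabel] at hupd ⊢
  rw [hcu] at hupd
  omega

lemma sum_eq_add_mul_add_sum_sub {p : ℕ} {f : Fin t → ℕ} (hp : ∀ i, p ≤ f i) (i₀ : Fin t) :
    ∑ i, f i = f i₀ + p * (t - 1) + ∑ i ∈ univ.erase i₀, (f i - p) := by
  rw [← add_sum_erase _ _ (mem_univ i₀), add_assoc,
    sum_congr rfl fun i _ => (Nat.add_sub_cancel' (hp i)).symm, sum_add_distrib, sum_const,
    card_erase_of_mem (mem_univ _), card_univ, Fintype.card_fin, smul_eq_mul, mul_comm]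

lemma eq_ite_of_sum_eq {p T : ℕ} {f : Fin t → ℕ} (hp : ∀ i, p ≤ f i) {i₀ : Fin t}
    (hsum : ∑ i, f i = T + p * (t - 1)) (hT : f i₀ = T) : f = fun i => if i = i₀ then T else p := by
  have hexcess := sum_eq_add_mul_add_sum_sub hp i₀
  funext m
  split_ifs with hm
  · rw [hm, hT]
  · have := (sum_eq_zero_iff.1 (by omega : ∑ i ∈ univ.erase i₀, (f i - p) = 0)) m
      (mem_erase.2 ⟨hm, mem_univ m⟩)
    have := hp m
    omega

lemma exists_move_to_largest_clique (hs : 0 < s) {p T : ℕ} {i₀ : Fin t} {nn : Fin t → ℕ}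
    (hp : ∀ i, p ≤ nn i) (hmax : ∀ i, nn i ≤ nn i₀) (hsum : ∑ i, nn i = T + p * (t - 1))
    (hlt : nn i₀ < T) :
    ∃ nn' : Fin t → ℕ, (∀ i, p ≤ nn' i) ∧ (∀ i, nn' i ≤ nn' i₀) ∧
      ∑ i, nn' i = T + p * (t - 1) ∧ nn' i₀ = nn i₀ + 1 ∧
      specRad (adjMat (joinCliques s nn)) < specRad (adjMat (joinCliques s nn')) := by
  obtain ⟨j, hj, hjp⟩ : ∃ j ∈ univ.erase i₀, p < nn j := by
    by_contra! h
    have := sum_eq_add_mul_add_sum_sub hp i₀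
    rw [sum_eq_zero fun j hj => Nat.sub_eq_zero_of_le (h j hj)] at this
    omega
  have hji₀ := ne_of_mem_erase hj
  set nn' := Function.update (Function.update nn i₀ (nn i₀ + 1)) j (nn j - 1)
  have hmove : ∀ m, nn' m + (if m = j then 1 else 0) = nn m + (if m = i₀ then 1 else 0) := by
    intro m
    simp only [nn', Function.update_apply]
    split_ifs <;> subst_vars <;> omega
  have hi₀ : nn' i₀ = nn i₀ + 1 := by simpa [hji₀.symm] using hmove i₀
  refine ⟨nn', fun m => ?_, fun m => ?_, ?_, hi₀,
    specRad_joinCliques_lt_of_move hs hji₀.symm (by omega) (hmax j) hmove⟩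
  · have := hmove m
    have := hp m
    split_ifs at * <;> subst_vars <;> omega
  · have := hmove m
    have := hmax m
    split_ifs at * <;> subst_vars <;> omega
  · have := sum_congr rfl fun m (_ : m ∈ univ) => hmove m
    simp only [sum_add_distrib, sum_ite_eq', mem_univ, if_true] at this
    omega

theorem specRad_joinCliques_lt_extremal (hs : 0 < s) {p T : ℕ} (i₀ : Fin t) (nn : Fin t → ℕ)
    (hp : ∀ i, p ≤ nn i) (hmax : ∀ i, nn i ≤ nn i₀) (hsum : ∑ i, nn i = T + p * (t - 1))
    (hlt : nn i₀ < T) :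
    specRad (adjMat (joinCliques s nn)) <
      specRad (adjMat (joinCliques s fun i => if i = i₀ then T else p)) := by
  induction hd : T - nn i₀ generalizing nn with
  | zero => omega
  | succ d ih =>
    obtain ⟨nn', hp', hmax', hsum', hi₀, hstep⟩ :=
      exists_move_to_largest_clique hs hp hmax hsum hlt
    refine hstep.trans_le ?_
    rcases (show nn' i₀ ≤ T by omega).lt_or_eq with hlt' | hT
    · exact (ih nn' hp' hmax' hsum' hlt' (by omega)).le
    · rw [eq_ite_of_sum_eq hp' hsum' hT]

theorem specRad_joinCliques_zero_lt {nn mm : Fin t → ℕ} {i₀ : Fin t} (hpos : 0 < nn i₀)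
    (hmax : ∀ i, nn i ≤ nn i₀) (hlt : nn i₀ < mm i₀) :
    specRad (adjMat (joinCliques 0 nn)) < specRad (adjMat (joinCliques 0 mm)) := by
  have : Nonempty (Fin 0 ⊕ (Σ i : Fin t, Fin (nn i))) := ⟨Sum.inr ⟨i₀, ⟨0, hpos⟩⟩⟩
  rw [joinCliques_eq_labelGraph, joinCliques_eq_labelGraph]
  have hupper := specRad_labelGraph_le_of_forall_ne_zero (c := cliqueLabel 0 nn) (m := nn i₀)
    (by rintro (⟨_, ⟨⟩⟩ | ⟨i, y⟩); exact Nat.succ_ne_zero _)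
    (by rintro (⟨_, ⟨⟩⟩ | ⟨i, y⟩); exact (card_cliqueLabel_succ nn i).trans_le (hmax i))
  have hlower := le_specRad_labelGraph (c := cliqueLabel 0 mm) (k := i₀ + 1) (Nat.succ_ne_zero _)
    ⟨Sum.inr ⟨i₀, ⟨0, hpos.trans hlt⟩⟩, rfl⟩
  rw [card_cliqueLabel_zero, card_cliqueLabel_succ, Nat.cast_zero, zero_add] at hlower
  have : (nn i₀ : ℝ) < mm i₀ := by exact_mod_cast hlt
  linarith

end JoinCliques

theorem stmt4 (s p : ℕ) {t : ℕ} (ht : 0 < t) (nn : Fin t → ℕ) (hanti : Antitone nn)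
    (hp : ∀ i, p ≤ nn i) (n : ℕ) (hn : n = (∑ i, nn i) + s)
    (h1 : nn ⟨0, ht⟩ < n - s - p * (t - 1)) :
    specRad (adjMat (joinCliques s nn)) <
      specRad (adjMat (joinCliques s
        (fun i : Fin t => if i = ⟨0, ht⟩ then n - s - p * (t - 1) else p))) := by
  set i₀ : Fin t := ⟨0, ht⟩
  have hmax : ∀ i, nn i ≤ nn i₀ := fun i => hanti (Fin.mk_le_of_le_val (Nat.zero_le _))
  have hsum : ∑ i, nn i = (n - s - p * (t - 1)) + p * (t - 1) := by
    have := sum_eq_add_mul_add_sum_sub hp i₀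
    omega
  rcases Nat.eq_zero_or_pos s with rfl | hs
  · refine specRad_joinCliques_zero_lt (i₀ := i₀) (Nat.pos_of_ne_zero fun h0 => ?_) hmax
      (by simpa using h1)
    have : ∑ i, nn i = 0 := sum_eq_zero fun i _ => Nat.eq_zero_of_le_zero (h0 ▸ hmax i)
    omega
  · exact specRad_joinCliques_lt_extremal hs i₀ nn hp hmax hsum h1
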